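/- For n ≥ 3, let a_n be the number of permutations π ∈ S_n such that st(π_{n−2}π_{n−1}π_n) = 123, π has no consecutive occurrence of 123 other than this final window, and π has no consecutive occurrence of 213; set a_0 = a_1 = a_2 = 0. Also, for n ≥ 3 let b_n be the number of π ∈ S_n with no consecutive occurrence of 123 and no consecutive occurrence of 213 and with st(π_{n−2}π_{n−1}π_n) = 312, with b_0 = b_1 = b_2 = 0. Then a_3 = 1, a_4 = 2, and for all n ≥ 5, a_n = a_{n−1} + (n−1)·a_{n−2} + b_{n−1}. -/

import Mathlib

open MeasureTheory ProbabilityTheory Real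

noncomputable section

/-- The window of `x` of length `k` starting at position `i` (0-indexed) is a consecutive
occurrence of the pattern `σ`, i.e., its standardization is `σ` (relative orders agree). -/
def OccursAt {k : ℕ} (σ : Equiv.Perm (Fin k)) (x : ℕ → ℝ) (i : ℕ) : Prop :=
  ∀ a b : Fin k, x (i + a) < x (i + b) ↔ σ a < σ b

/-- `hitTime σ x` is the number of draws until the first consecutive occurrence of `σ`,
i.e., the least `j ≥ k` such that the window `x_{j-k}, …, x_{j-1}` is an occurrence of `σ`. -/
def hitTime {k : ℕ} (σ : Equiv.Perm (Fin k)) (x : ℕ → ℝ) : ℕ :=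
  sInf {j | k ≤ j ∧ OccursAt σ x (j - k)}

/-- `μ` is the law of an i.i.d. sequence of uniform random variables on `[0,1]`:
a probability measure on `ℕ → ℝ` whose finite-dimensional marginals are products of
the uniform measure on `[0,1]`. -/
def IsIIDUniform (μ : Measure (ℕ → ℝ)) : Prop :=
  IsProbabilityMeasure μ ∧
  ∀ n : ℕ, μ.map (fun x (i : Fin n) => x i) =
    Measure.pi (fun _ : Fin n => (volume : Measure ℝ).restrict (Set.Icc 0 1))

/-- The pattern `σ ∈ S_k` occurs consecutively at position `i` (0-indexed) in the
permutation `p ∈ S_n`, written in one-line notation. -/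
def PermOccursAt {k n : ℕ} (σ : Equiv.Perm (Fin k)) (p : Equiv.Perm (Fin n)) (i : ℕ) : Prop :=
  ∃ h : i + k ≤ n, ∀ a b : Fin k,
    p ⟨i + a, Nat.lt_of_lt_of_le (Nat.add_lt_add_left a.isLt i) h⟩ <
      p ⟨i + b, Nat.lt_of_lt_of_le (Nat.add_lt_add_left b.isLt i) h⟩ ↔ σ a < σ b

/-- `avoidCount σ n` is the number `α_n(σ)` of permutations in `S_n` avoiding `σ`
as a consecutive pattern. -/
def avoidCount {k : ℕ} (σ : Equiv.Perm (Fin k)) (n : ℕ) : ℕ :=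
  Nat.card {p : Equiv.Perm (Fin n) // ∀ i, ¬ PermOccursAt σ p i}

/-- Neither of the patterns `σ`, `τ` contains a consecutive occurrence of the other. -/
def Incomparable {k l : ℕ} (σ : Equiv.Perm (Fin k)) (τ : Equiv.Perm (Fin l)) : Prop :=
  (∀ i, ¬ PermOccursAt σ τ i) ∧ (∀ i, ¬ PermOccursAt τ σ i)

def pseq (n : ℕ) (p : Equiv.Perm (Fin n)) : ℕ → ℕ := fun i => if h : i < n then (p ⟨i, h⟩ : ℕ) else 0

lemma pseq_eq {n : ℕ} (p : Equiv.Perm (Fin n)) {i : ℕ} (h : i < n) : pseq n p i = (p ⟨i, h⟩ : ℕ) :=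
  dif_pos h

lemma occ_iff_pseq {n : ℕ} (σ : Equiv.Perm (Fin 3)) (p : Equiv.Perm (Fin n)) (i : ℕ) :
    PermOccursAt σ p i ↔
      (i + 3 ≤ n ∧ ∀ a b : Fin 3, pseq n p (i + a) < pseq n p (i + b) ↔ σ a < σ b) := by
  constructor
  · rintro ⟨h, H⟩
    refine ⟨h, fun a b => ?_⟩
    rw [pseq_eq p (by omega : i + (a:ℕ) < n), pseq_eq p (by omega : i + (b:ℕ) < n)]
    rw [← H a b]
    exact Fin.val_fin_lt
  · rintro ⟨h, H⟩
    refine ⟨h, fun a b => ?_⟩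
    rw [← H a b, pseq_eq p (by omega : i + (a:ℕ) < n), pseq_eq p (by omega : i + (b:ℕ) < n)]
    exact Fin.val_fin_lt.symm

lemma chain123 {σ : Equiv.Perm (Fin 3)} (h0 : σ 0 = 0) (h1 : σ 1 = 1) (h2 : σ 2 = 2)
    (f : ℕ → ℕ) (i : ℕ) :
    (∀ a b : Fin 3, f (i + a) < f (i + b) ↔ σ a < σ b) ↔ (f i < f (i+1) ∧ f (i+1) < f (i+2)) := by
  constructor
  · intro H
    have A := H 0 1
    have B := H 1 2
    rw [h0, h1] at A
    rw [h1, h2] at B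
    simp only [Fin.val_zero, Fin.val_one, Fin.val_two, Nat.add_zero] at A B
    exact ⟨A.mpr (by decide), B.mpr (by decide)⟩
  · rintro ⟨c1, c2⟩ a b
    fin_cases a <;> fin_cases b <;>
      simp [h0, h1, h2, Fin.lt_def] <;> omega

lemma chain213 {σ : Equiv.Perm (Fin 3)} (h0 : σ 0 = 1) (h1 : σ 1 = 0) (h2 : σ 2 = 2)
    (f : ℕ → ℕ) (i : ℕ) :
    (∀ a b : Fin 3, f (i + a) < f (i + b) ↔ σ a < σ b) ↔ (f (i+1) < f i ∧ f i < f (i+2)) := by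
  constructor
  · intro H
    have A := H 1 0
    have B := H 0 2
    rw [h0, h1] at A
    rw [h0, h2] at B
    simp only [Fin.val_zero, Fin.val_one, Fin.val_two, Nat.add_zero] at A B
    exact ⟨A.mpr (by decide), B.mpr (by decide)⟩
  · rintro ⟨c1, c2⟩ a b
    fin_cases a <;> fin_cases b <;>
      simp [h0, h1, h2, Fin.lt_def] <;> omega

lemma chain312 {σ : Equiv.Perm (Fin 3)} (h0 : σ 0 = 2) (h1 : σ 1 = 0) (h2 : σ 2 = 1)
    (f : ℕ → ℕ) (i : ℕ) :
    (∀ a b : Fin 3, f (i + a) < f (i + b) ↔ σ a < σ b) ↔ (f (i+1) < f (i+2) ∧ f (i+2) < f i) := by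
  constructor
  · intro H
    have A := H 1 2
    have B := H 2 0
    rw [h1, h2] at A
    rw [h2, h0] at B
    simp only [Fin.val_zero, Fin.val_one, Fin.val_two, Nat.add_zero] at A B
    exact ⟨A.mpr (by decide), B.mpr (by decide)⟩
  · rintro ⟨c1, c2⟩ a b
    fin_cases a <;> fin_cases b <;>
      simp [h0, h1, h2, Fin.lt_def] <;> omega

def PermSeq (n : ℕ) (s : ℕ → ℕ) : Prop :=
  (∀ i, i < n → s i < n) ∧ (∀ i j, i < n → j < n → s i = s j → i = j) ∧ ∀ i, n ≤ i → s i = 0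

def CondA (n : ℕ) (s : ℕ → ℕ) : Prop :=
  (∀ i, i + 3 < n → s (i+2) < max (s i) (s (i+1))) ∧ s (n-3) < s (n-2) ∧ s (n-2) < s (n-1)

def CondB (n : ℕ) (s : ℕ → ℕ) : Prop :=
  (∀ i, i + 3 < n → s (i+2) < max (s i) (s (i+1))) ∧ s (n-2) < s (n-1) ∧ s (n-1) < s (n-3)

lemma permSeq_pseq (n : ℕ) (p : Equiv.Perm (Fin n)) : PermSeq n (pseq n p) := by
  refine ⟨fun i hi => ?_, fun i j hi hj hij => ?_, fun i hi => dif_neg (by omega)⟩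
  · rw [pseq_eq p hi]; exact (p ⟨i, hi⟩).isLt
  · rw [pseq_eq p hi, pseq_eq p hj] at hij
    have := p.injective (Fin.val_injective hij)
    exact congrArg Fin.val this

lemma permSeq_surj {n : ℕ} {s : ℕ → ℕ} (hs : PermSeq n s) {v : ℕ} (hv : v < n) :
    ∃ j, j < n ∧ s j = v := by
  have hinj : Function.Injective (fun i : Fin n => (⟨s i, hs.1 i i.2⟩ : Fin n)) := by
    intro i j hij
    exact Fin.ext (hs.2.1 i j i.2 j.2 (congrArg Fin.val hij))
  have hsurj := (Finite.injective_iff_bijective.mp hinj).2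
  obtain ⟨j, hj⟩ := hsurj ⟨v, hv⟩
  exact ⟨j, j.2, congrArg Fin.val hj⟩

noncomputable def permToSeq (n : ℕ) : Equiv.Perm (Fin n) ≃ {s : ℕ → ℕ // PermSeq n s} where
  toFun p := ⟨pseq n p, permSeq_pseq n p⟩
  invFun s := Equiv.ofBijective (fun i => ⟨s.1 i, s.2.1 i i.2⟩)
    (Finite.injective_iff_bijective.mp (fun i j hij =>
      Fin.ext (s.2.2.1 i j i.2 j.2 (congrArg Fin.val hij))))
  left_inv p := by
    ext i
    simp [Equiv.ofBijective, pseq_eq p i.2]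
  right_inv s := by
    ext i
    by_cases hi : i < n
    · simp [pseq_eq _ hi, Equiv.ofBijective]
    · exact (dif_neg hi).trans (s.2.2.2 i (by omega)).symm

section chars
variable {n : ℕ} {σ123 σ213 σ312 : Equiv.Perm (Fin 3)}
  (h123 : σ123 0 = 0 ∧ σ123 1 = 1 ∧ σ123 2 = 2)
  (h213 : σ213 0 = 1 ∧ σ213 1 = 0 ∧ σ213 2 = 2)
  (h312 : σ312 0 = 2 ∧ σ312 1 = 0 ∧ σ312 2 = 1)
  (p : Equiv.Perm (Fin n))

include h123 in
lemma occ123_iff (i : ℕ) : PermOccursAt σ123 p i ↔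
    i + 3 ≤ n ∧ pseq n p i < pseq n p (i+1) ∧ pseq n p (i+1) < pseq n p (i+2) := by
  rw [occ_iff_pseq, chain123 h123.1 h123.2.1 h123.2.2]

include h213 in
lemma occ213_iff (i : ℕ) : PermOccursAt σ213 p i ↔
    i + 3 ≤ n ∧ pseq n p (i+1) < pseq n p i ∧ pseq n p i < pseq n p (i+2) := by
  rw [occ_iff_pseq, chain213 h213.1 h213.2.1 h213.2.2]

include h312 in
lemma occ312_iff (i : ℕ) : PermOccursAt σ312 p i ↔
    i + 3 ≤ n ∧ pseq n p (i+1) < pseq n p (i+2) ∧ pseq n p (i+2) < pseq n p i := by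
  rw [occ_iff_pseq, chain312 h312.1 h312.2.1 h312.2.2]

include h123 h213 in
lemma bigA_iff (hn : 3 ≤ n) :
    (PermOccursAt σ123 p (n - 3) ∧ (∀ i, PermOccursAt σ123 p i → i = n - 3) ∧
      (∀ i, ¬ PermOccursAt σ213 p i)) ↔ CondA n (pseq n p) := by
  have hs := permSeq_pseq n p
  have hd : ∀ i j, i < n → j < n → i ≠ j → pseq n p i ≠ pseq n p j := by
    intro i j hi hj hij hEq
    exact hij (hs.2.1 i j hi hj hEq)
  constructor
  · rintro ⟨hocc, honly, h213a⟩
    rw [occ123_iff h123] at hocc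
    have hchain1 : pseq n p (n-3) < pseq n p (n-2) := by
      have h1 : n - 3 + 1 = n - 2 := by omega
      have h2 : n - 3 + 2 = n - 1 := by omega
      rw [h1, h2] at hocc; exact hocc.2.1
    have hchain2 : pseq n p (n-2) < pseq n p (n-1) := by
      have h1 : n - 3 + 1 = n - 2 := by omega
      have h2 : n - 3 + 2 = n - 1 := by omega
      rw [h1, h2] at hocc; exact hocc.2.2
    refine ⟨fun i hi => ?_, hchain1, hchain2⟩
    have hn123 : ¬ PermOccursAt σ123 p i := fun h => by have := honly i h; omega
    have hn213 := h213a i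
    rw [occ123_iff h123] at hn123
    rw [occ213_iff h213] at hn213
    push_neg at hn123 hn213
    have d1 := hd i (i+1) (by omega) (by omega) (by omega)
    have d2 := hd i (i+2) (by omega) (by omega) (by omega)
    have d3 := hd (i+1) (i+2) (by omega) (by omega) (by omega)
    have c1 := hn123 (by omega)
    have c2 := hn213 (by omega)
    rw [lt_max_iff]
    omega
  · rintro ⟨hwin, hc1, hc2⟩
    have h1 : n - 3 + 1 = n - 2 := by omega
    have h2 : n - 3 + 2 = n - 1 := by omega
    refine ⟨?_, fun i hi => ?_, fun i hi => ?_⟩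
    · rw [occ123_iff h123, h1, h2]; exact ⟨by omega, hc1, hc2⟩
    · rw [occ123_iff h123] at hi
      by_contra hne
      have hw := hwin i (by omega)
      rw [lt_max_iff] at hw
      omega
    · rw [occ213_iff h213] at hi
      by_cases hie : i = n - 3
      · subst hie; rw [h1, h2] at hi; omega
      · have hw := hwin i (by omega)
        rw [lt_max_iff] at hw
        omega

include h123 h213 h312 in
lemma bigB_iff (hn : 3 ≤ n) :
    ((∀ i, ¬ PermOccursAt σ123 p i) ∧ (∀ i, ¬ PermOccursAt σ213 p i) ∧
      PermOccursAt σ312 p (n - 3)) ↔ CondB n (pseq n p) := by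
  have hs := permSeq_pseq n p
  have hd : ∀ i j, i < n → j < n → i ≠ j → pseq n p i ≠ pseq n p j := by
    intro i j hi hj hij hEq
    exact hij (hs.2.1 i j hi hj hEq)
  have h1 : n - 3 + 1 = n - 2 := by omega
  have h2 : n - 3 + 2 = n - 1 := by omega
  constructor
  · rintro ⟨h123a, h213a, hocc⟩
    rw [occ312_iff h312, h1, h2] at hocc
    refine ⟨fun i hi => ?_, hocc.2.1, hocc.2.2⟩
    have hn123 := h123a i
    have hn213 := h213a i
    rw [occ123_iff h123] at hn123
    rw [occ213_iff h213] at hn213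
    push_neg at hn123 hn213
    have d1 := hd i (i+1) (by omega) (by omega) (by omega)
    have d2 := hd i (i+2) (by omega) (by omega) (by omega)
    have d3 := hd (i+1) (i+2) (by omega) (by omega) (by omega)
    have c1 := hn123 (by omega)
    have c2 := hn213 (by omega)
    rw [lt_max_iff]
    omega
  · rintro ⟨hwin, hc1, hc2⟩
    refine ⟨fun i hi => ?_, fun i hi => ?_, ?_⟩
    · rw [occ123_iff h123] at hi
      by_cases hie : i = n - 3
      · subst hie; rw [h1, h2] at hi; omega
      · have hw := hwin i (by omega)
        rw [lt_max_iff] at hw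
        omega
    · rw [occ213_iff h213] at hi
      by_cases hie : i = n - 3
      · subst hie; rw [h1, h2] at hi; omega
      · have hw := hwin i (by omega)
        rw [lt_max_iff] at hw
        omega
    · rw [occ312_iff h312, h1, h2]; exact ⟨by omega, hc1, hc2⟩

end chars

noncomputable def seqSub (n : ℕ) (Q : (ℕ → ℕ) → Prop) :
    {p : Equiv.Perm (Fin n) // Q (pseq n p)} ≃ {s : ℕ → ℕ // PermSeq n s ∧ Q s} :=
  ((permToSeq n).subtypeEquiv (fun _ => Iff.rfl)).trans
    (Equiv.subtypeSubtypeEquivSubtypeInter _ _)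

instance finSeq (n : ℕ) (Q : (ℕ → ℕ) → Prop) : Finite {s : ℕ → ℕ // PermSeq n s ∧ Q s} :=
  Finite.of_equiv _ (seqSub n Q)

noncomputable def equivI (n : ℕ) (hn : 5 ≤ n) :
    {x : {s : ℕ → ℕ // PermSeq n s ∧ CondA n s} // x.1 0 = n-1} ≃
      {s : ℕ → ℕ // PermSeq (n-1) s ∧ CondA (n-1) s} where
  toFun x := ⟨fun i => if i < n-1 then x.1.1 (i+1) else 0, by
    obtain ⟨⟨s, ⟨hv, hinj, hz⟩, hw, hc1, hc2⟩, h0⟩ := x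
    have h0' : s 0 = n-1 := h0
    have hne : ∀ j, j < n → j ≠ 0 → s j ≠ n-1 := fun j hj hj0 hEq => by
      have := hinj j 0 hj (by omega) (by rw [hEq, h0'])
      omega
    refine ⟨⟨fun i hi => ?_, fun i j hi hj hij => ?_, fun i hi => ?_⟩,
      fun i hi => ?_, ?_, ?_⟩
    · dsimp only
      rw [if_pos hi]
      have := hv (i+1) (by omega)
      have := hne (i+1) (by omega) (by omega)
      omega
    · dsimp only at hij
      rw [if_pos hi, if_pos hj] at hij
      have := hinj (i+1) (j+1) (by omega) (by omega) hij
      omega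
    · dsimp only
      rw [if_neg (by omega)]
    · dsimp only
      rw [if_pos (by omega : i+2 < n-1), if_pos (by omega : i < n-1),
        if_pos (by omega : i+1 < n-1)]
      exact hw (i+1) (by omega)
    · dsimp only
      rw [(by omega : n-1-3 = n-4), (by omega : n-1-2 = n-3),
        if_pos (by omega : n-4 < n-1), if_pos (by omega : n-3 < n-1),
        (by omega : n-4+1 = n-3), (by omega : n-3+1 = n-2)]
      exact hc1
    · dsimp only
      rw [(by omega : n-1-1 = n-2), (by omega : n-1-2 = n-3),
        if_pos (by omega : n-3 < n-1), if_pos (by omega : n-2 < n-1),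
        (by omega : n-3+1 = n-2), (by omega : n-2+1 = n-1)]
      exact hc2⟩
  invFun y := ⟨⟨fun i => if i = 0 then n-1 else if i < n then y.1 (i-1) else 0, by
    obtain ⟨t, ⟨hv, hinj, hz⟩, hw, hc1, hc2⟩ := y
    refine ⟨⟨fun i hi => ?_, fun i j hi hj hij => ?_, fun i hi => ?_⟩,
      fun i hi => ?_, ?_, ?_⟩
    · dsimp only
      split_ifs with h1 h2
      all_goals first | omega | (have := hv (i-1) (by omega); omega)
    · dsimp only at hij
      by_cases hi0 : i = 0 <;> by_cases hj0 : j = 0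
      · omega
      · rw [if_pos hi0, if_neg hj0, if_pos hj] at hij
        have := hv (j-1) (by omega)
        omega
      · rw [if_neg hi0, if_pos hj0, if_pos hi] at hij
        have := hv (i-1) (by omega)
        omega
      · rw [if_neg hi0, if_neg hj0, if_pos hi, if_pos hj] at hij
        have := hinj (i-1) (j-1) (by omega) (by omega) hij
        omega
    · dsimp only
      rw [if_neg (by omega : ¬ i = 0), if_neg (by omega : ¬ i < n)]
    · dsimp only
      by_cases hi0 : i = 0
      · subst hi0
        rw [lt_max_iff]
        left
        rw [if_pos rfl, if_neg (by omega : ¬ (0+2:ℕ) = 0), if_pos (by omega : 0+2 < n)]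
        have := hv (0+2-1) (by omega)
        omega
      · rw [if_neg (by omega : ¬ i + 2 = 0), if_pos (by omega : i+2 < n),
          if_neg hi0, if_pos (by omega : i < n),
          if_neg (by omega : ¬ i + 1 = 0), if_pos (by omega : i+1 < n)]
        have hwy := hw (i-1) (by omega)
        rw [(by omega : i-1+2 = i+1), (by omega : i-1+1 = i)] at hwy
        rw [(by omega : i + 2 - 1 = i + 1), (by omega : i + 1 - 1 = i)]
        exact hwy
    · dsimp only
      rw [if_neg (by omega : ¬ n-3 = 0), if_pos (by omega : n-3 < n),
        if_neg (by omega : ¬ n-2 = 0), if_pos (by omega : n-2 < n)]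
      have h := hc1
      rw [(by omega : n-1-3 = n-4), (by omega : n-1-2 = n-3)] at h
      rw [(by omega : n-3-1 = n-4), (by omega : n-2-1 = n-3)]
      exact h
    · dsimp only
      rw [if_neg (by omega : ¬ n-2 = 0), if_pos (by omega : n-2 < n),
        if_neg (by omega : ¬ n-1 = 0), if_pos (by omega : n-1 < n)]
      have h := hc2
      rw [(by omega : n-1-2 = n-3), (by omega : n-1-1 = n-2)] at h
      rw [(by omega : n-2-1 = n-3), (by omega : n-1-1 = n-2)]
      exact h⟩, by simp⟩
  left_inv x := by
    obtain ⟨⟨s, ⟨hv, hinj, hz⟩, hA⟩, h0⟩ := x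
    have h0' : s 0 = n-1 := h0
    refine Subtype.ext (Subtype.ext (funext fun i => ?_))
    dsimp only
    by_cases hi0 : i = 0
    · subst hi0; rw [if_pos rfl, h0']
    · rw [if_neg hi0]
      by_cases hi : i < n
      · rw [if_pos hi, if_pos (by omega : i-1 < n-1), (by omega : i-1+1 = i)]
      · rw [if_neg hi]
        exact (hz i (by omega)).symm
  right_inv y := by
    obtain ⟨t, ⟨hv, hinj, hz⟩, hB⟩ := y
    refine Subtype.ext (funext fun i => ?_)
    dsimp only
    by_cases hi : i < n-1
    · rw [if_pos hi, if_neg (by omega : ¬ i+1 = 0), if_pos (by omega : i+1 < n),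
        Nat.add_sub_cancel]
    · rw [if_neg hi]
      exact (hz i (by omega)).symm

noncomputable def equivIII (n : ℕ) (hn : 5 ≤ n) :
    {x : {s : ℕ → ℕ // PermSeq n s ∧ CondA n s} // x.1 (n-1) = n-1} ≃
      {s : ℕ → ℕ // PermSeq (n-1) s ∧ CondB (n-1) s} where
  toFun x := ⟨fun i => if i < n-1 then x.1.1 i else 0, by
    obtain ⟨⟨s, ⟨hv, hinj, hz⟩, hw, hc1, hc2⟩, h0⟩ := x
    have h0' : s (n-1) = n-1 := h0
    have hne : ∀ j, j < n-1 → s j ≠ n-1 := fun j hj hEq => by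
      have := hinj j (n-1) (by omega) (by omega) (by rw [hEq, h0'])
      omega
    refine ⟨⟨fun i hi => ?_, fun i j hi hj hij => ?_, fun i hi => ?_⟩,
      fun i hi => ?_, ?_, ?_⟩
    · dsimp only
      rw [if_pos hi]
      have := hv i (by omega)
      have := hne i hi
      omega
    · dsimp only at hij
      rw [if_pos hi, if_pos hj] at hij
      exact hinj i j (by omega) (by omega) hij
    · dsimp only
      rw [if_neg (by omega)]
    · dsimp only
      rw [if_pos (by omega : i+2 < n-1), if_pos (by omega : i < n-1),
        if_pos (by omega : i+1 < n-1)]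
      exact hw i (by omega)
    · dsimp only
      rw [(by omega : n-1-2 = n-3), (by omega : n-1-1 = n-2),
        if_pos (by omega : n-3 < n-1), if_pos (by omega : n-2 < n-1)]
      exact hc1
    · dsimp only
      rw [(by omega : n-1-1 = n-2), (by omega : n-1-3 = n-4),
        if_pos (by omega : n-2 < n-1), if_pos (by omega : n-4 < n-1)]
      have hwn := hw (n-4) (by omega)
      rw [(by omega : n-4+2 = n-2), (by omega : n-4+1 = n-3), lt_max_iff] at hwn
      omega⟩
  invFun y := ⟨⟨fun i => if i < n-1 then y.1 i else if i = n-1 then n-1 else 0, by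
    obtain ⟨t, ⟨hv, hinj, hz⟩, hw, hc1, hc2⟩ := y
    refine ⟨⟨fun i hi => ?_, fun i j hi hj hij => ?_, fun i hi => ?_⟩,
      fun i hi => ?_, ?_, ?_⟩
    · dsimp only
      split_ifs with h1 h2
      all_goals first | omega | (have := hv i (by omega); omega)
    · dsimp only at hij
      by_cases hi0 : i < n-1 <;> by_cases hj0 : j < n-1
      · rw [if_pos hi0, if_pos hj0] at hij
        exact hinj i j hi0 hj0 hij
      · rw [if_pos hi0, if_neg hj0, if_pos (by omega : j = n-1)] at hij
        have := hv i hi0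
        omega
      · rw [if_neg hi0, if_pos hj0, if_pos (by omega : i = n-1)] at hij
        have := hv j hj0
        omega
      · omega
    · dsimp only
      rw [if_neg (by omega : ¬ i < n-1), if_neg (by omega : ¬ i = n-1)]
    · dsimp only
      by_cases hc : i + 3 < n-1
      · rw [if_pos (by omega : i+2 < n-1), if_pos (by omega : i < n-1),
          if_pos (by omega : i+1 < n-1)]
        exact hw i hc
      · have hie : i = n-4 := by omega
        subst hie
        rw [if_pos (by omega : n-4+2 < n-1), if_pos (by omega : n-4 < n-1),
          if_pos (by omega : n-4+1 < n-1), lt_max_iff,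
          (by omega : n-4+2 = n-2), (by omega : n-4+1 = n-3)]
        have h := hc2
        rw [(by omega : n-1-1 = n-2), (by omega : n-1-3 = n-4)] at h
        left
        exact h
    · dsimp only
      rw [if_pos (by omega : n-3 < n-1), if_pos (by omega : n-2 < n-1)]
      have h := hc1
      rw [(by omega : n-1-2 = n-3), (by omega : n-1-1 = n-2)] at h
      exact h
    · dsimp only
      rw [if_pos (by omega : n-2 < n-1), if_neg (by omega : ¬ n-1 < n-1),
        if_pos rfl]
      have := hv (n-2) (by omega)
      omega⟩, by
    dsimp only
    rw [if_neg (by omega : ¬ n-1 < n-1), if_pos rfl]⟩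
  left_inv x := by
    obtain ⟨⟨s, ⟨hv, hinj, hz⟩, hA⟩, h0⟩ := x
    have h0' : s (n-1) = n-1 := h0
    refine Subtype.ext (Subtype.ext (funext fun i => ?_))
    dsimp only
    by_cases hi : i < n-1
    · rw [if_pos hi, if_pos hi]
    · rw [if_neg hi]
      by_cases hi2 : i = n-1
      · rw [if_pos hi2, hi2, h0']
      · rw [if_neg hi2]
        exact (hz i (by omega)).symm
  right_inv y := by
    obtain ⟨t, ⟨hv, hinj, hz⟩, hB⟩ := y
    refine Subtype.ext (funext fun i => ?_)
    dsimp only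
    by_cases hi : i < n-1
    · rw [if_pos hi, if_pos hi]
    · rw [if_neg hi]
      exact (hz i (by omega)).symm

set_option maxHeartbeats 2000000 in
noncomputable def equivII (n : ℕ) (hn : 5 ≤ n) :
    {x : {s : ℕ → ℕ // PermSeq n s ∧ CondA n s} // x.1 0 ≠ n-1 ∧ x.1 1 = n-1} ≃
      Fin (n-1) × {s : ℕ → ℕ // PermSeq (n-2) s ∧ CondA (n-2) s} where
  toFun x := ⟨⟨x.1.1 0, by
      obtain ⟨⟨s, ⟨hv, hinj, hz⟩, hA⟩, h0, h1⟩ := x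
      have := hv 0 (by omega)
      simp only at h0 ⊢
      omega⟩,
    ⟨fun i => if i < n-2 then (if x.1.1 (i+2) < x.1.1 0 then x.1.1 (i+2) else x.1.1 (i+2) - 1)
      else 0, by
    obtain ⟨⟨s, ⟨hv, hinj, hz⟩, hw, hc1, hc2⟩, h0, h1⟩ := x
    have h0' : s 0 ≠ n-1 := h0
    have h1' : s 1 = n-1 := h1
    have hne0 : ∀ j, j < n → j ≠ 0 → s j ≠ s 0 := fun j hj hj0 hEq => by
      have := hinj j 0 hj (by omega) hEq
      omega
    have hne1 : ∀ j, j < n → j ≠ 1 → s j ≠ n-1 := fun j hj hj1 hEq => by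
      have := hinj j 1 hj (by omega) (by rw [hEq, h1'])
      omega
    refine ⟨⟨fun i hi => ?_, fun i j hi hj hij => ?_, fun i hi => ?_⟩,
      fun i hi => ?_, ?_, ?_⟩
    · dsimp only
      rw [if_pos hi]
      have v2 := hv (i+2) (by omega)
      have e0 := hne0 (i+2) (by omega) (by omega)
      have e1 := hne1 (i+2) (by omega) (by omega)
      have v0 := hv 0 (by omega)
      split_ifs <;> omega
    · dsimp only at hij
      rw [if_pos hi, if_pos hj] at hij
      have e0i := hne0 (i+2) (by omega) (by omega)
      have e0j := hne0 (j+2) (by omega) (by omega)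
      have heq : s (i+2) = s (j+2) := by
        split_ifs at hij <;> omega
      have := hinj (i+2) (j+2) (by omega) (by omega) heq
      omega
    · dsimp only
      rw [if_neg (by omega)]
    · dsimp only
      rw [if_pos (by omega : i+2 < n-2), if_pos (by omega : i < n-2),
        if_pos (by omega : i+1 < n-2)]
      have hwn := hw (i+2) (by omega)
      rw [(by omega : i+2+2 = i+4), (by omega : i+2+1 = i+3), lt_max_iff] at hwn
      have e2 := hne0 (i+2) (by omega) (by omega)
      have e3 := hne0 (i+3) (by omega) (by omega)
      have e4 := hne0 (i+4) (by omega) (by omega)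
      rw [lt_max_iff, (by omega : i+2+2 = i+4), (by omega : i+1+2 = i+3)]
      split_ifs <;> omega
    · dsimp only
      rw [(by omega : n-2-3 = n-5), (by omega : n-2-2 = n-4),
        if_pos (by omega : n-5 < n-2), if_pos (by omega : n-4 < n-2),
        (by omega : n-5+2 = n-3), (by omega : n-4+2 = n-2)]
      have e2 := hne0 (n-3) (by omega) (by omega)
      have e3 := hne0 (n-2) (by omega) (by omega)
      split_ifs <;> omega
    · dsimp only
      rw [(by omega : n-2-2 = n-4), (by omega : n-2-1 = n-3),
        if_pos (by omega : n-4 < n-2), if_pos (by omega : n-3 < n-2),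
        (by omega : n-4+2 = n-2), (by omega : n-3+2 = n-1)]
      have e2 := hne0 (n-2) (by omega) (by omega)
      have e3 := hne0 (n-1) (by omega) (by omega)
      split_ifs <;> omega⟩⟩
  invFun cy := ⟨⟨fun i => if i = 0 then (cy.1 : ℕ) else if i = 1 then n-1
      else if i < n then (if cy.2.1 (i-2) < (cy.1 : ℕ) then cy.2.1 (i-2) else cy.2.1 (i-2) + 1)
      else 0, by
    obtain ⟨c, t, ⟨hv, hinj, hz⟩, hw, hc1, hc2⟩ := cy
    have hcv : (c : ℕ) < n-1 := c.isLt
    have hun : ∀ j, j < n-2 →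
        (if t j < (c:ℕ) then t j else t j + 1) ≠ (c:ℕ) ∧
        (if t j < (c:ℕ) then t j else t j + 1) < n-1 := fun j hj => by
      have := hv j hj
      split_ifs <;> omega
    have key : ∀ i j, 2 ≤ i → i < n → 2 ≤ j → j < n →
        (if t (i-2) < (c:ℕ) then t (i-2) else t (i-2)+1) =
          (if t (j-2) < (c:ℕ) then t (j-2) else t (j-2)+1) → i = j := by
      intro i j hi2 hi hj2 hj hEq
      have heq : t (i-2) = t (j-2) := by split_ifs at hEq <;> omega
      have := hinj (i-2) (j-2) (by omega) (by omega) heq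
      omega
    refine ⟨⟨fun i hi => ?_, fun i j hi hj hij => ?_, fun i hi => ?_⟩,
      fun i hi => ?_, ?_, ?_⟩
    · dsimp only
      split_ifs
      all_goals first | omega | (have := hv (i-2) (by omega); omega)
    · dsimp only at hij
      by_cases hi0 : i = 0 <;> by_cases hi1 : i = 1 <;>
        by_cases hj0 : j = 0 <;> by_cases hj1 : j = 1
      all_goals try omega
      · rw [if_pos hi0, if_neg hj0, if_pos hj1] at hij
        omega
      · rw [if_pos hi0, if_neg hj0, if_neg hj1, if_pos hj] at hij
        have := (hun (j-2) (by omega)).1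
        omega
      · rw [if_neg hi0, if_pos hi1, if_pos hj0] at hij
        omega
      · rw [if_neg hi0, if_pos hi1, if_neg hj0, if_neg hj1, if_pos hj] at hij
        have := (hun (j-2) (by omega)).2
        omega
      · rw [if_neg hi0, if_neg hi1, if_pos hi, if_pos hj0] at hij
        have := (hun (i-2) (by omega)).1
        omega
      · rw [if_neg hi0, if_neg hi1, if_pos hi, if_neg hj0, if_pos hj1] at hij
        have := (hun (i-2) (by omega)).2
        omega
      · rw [if_neg hi0, if_neg hi1, if_pos hi, if_neg hj0, if_neg hj1, if_pos hj] at hij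
        exact key i j (by omega) hi (by omega) hj hij
    · dsimp only
      rw [if_neg (by omega : ¬ i = 0), if_neg (by omega : ¬ i = 1),
        if_neg (by omega : ¬ i < n)]
    · dsimp only
      by_cases hi0 : i = 0
      · subst hi0
        rw [lt_max_iff]
        right
        rw [if_neg (by omega : ¬ (0+1:ℕ) = 0), if_pos (by omega : (0+1:ℕ) = 1),
          if_neg (by omega : ¬ (0+2:ℕ) = 0), if_neg (by omega : ¬ (0+2:ℕ) = 1),
          if_pos (by omega : 0+2 < n)]
        exact (hun (0+2-2) (by omega)).2
      · by_cases hi1 : i = 1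
        · subst hi1
          rw [lt_max_iff]
          left
          rw [if_neg (by omega : ¬ (1:ℕ) = 0), if_pos rfl,
            if_neg (by omega : ¬ (1+2:ℕ) = 0), if_neg (by omega : ¬ (1+2:ℕ) = 1),
            if_pos (by omega : 1+2 < n)]
          exact (hun (1+2-2) (by omega)).2
        · rw [if_neg (by omega : ¬ i+2 = 0), if_neg (by omega : ¬ i+2 = 1),
            if_pos (by omega : i+2 < n),
            if_neg hi0, if_neg hi1, if_pos (by omega : i < n),
            if_neg (by omega : ¬ i+1 = 0), if_neg (by omega : ¬ i+1 = 1),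
            if_pos (by omega : i+1 < n), lt_max_iff,
            (by omega : i+2-2 = i), (by omega : i+1-2 = i-1)]
          have hwn := hw (i-2) (by omega)
          rw [(by omega : i-2+2 = i), (by omega : i-2+1 = i-1), lt_max_iff] at hwn
          split_ifs <;> omega
    · dsimp only
      rw [if_neg (by omega : ¬ n-3 = 0), if_neg (by omega : ¬ n-3 = 1),
        if_pos (by omega : n-3 < n),
        if_neg (by omega : ¬ n-2 = 0), if_neg (by omega : ¬ n-2 = 1),
        if_pos (by omega : n-2 < n)]
      simp only [(by omega : n-3-2 = n-5), (by omega : n-2-2 = n-4)]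
      have h := hc1
      rw [(by omega : n-2-3 = n-5), (by omega : n-2-2 = n-4)] at h
      split_ifs <;> omega
    · dsimp only
      rw [if_neg (by omega : ¬ n-2 = 0), if_neg (by omega : ¬ n-2 = 1),
        if_pos (by omega : n-2 < n),
        if_neg (by omega : ¬ n-1 = 0), if_neg (by omega : ¬ n-1 = 1),
        if_pos (by omega : n-1 < n)]
      simp only [(by omega : n-2-2 = n-4), (by omega : n-1-2 = n-3)]
      have h := hc2
      rw [(by omega : n-2-2 = n-4), (by omega : n-2-1 = n-3)] at h
      split_ifs <;> omega⟩, by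
    constructor
    · dsimp only
      rw [if_pos rfl]
      have := cy.1.isLt
      omega
    · dsimp only
      rw [if_neg (by omega : ¬ (1:ℕ) = 0), if_pos rfl]⟩
  left_inv x := by
    obtain ⟨⟨s, ⟨hv, hinj, hz⟩, hA⟩, h0, h1⟩ := x
    have h0' : s 0 ≠ n-1 := h0
    have h1' : s 1 = n-1 := h1
    have hne0 : ∀ j, j < n → j ≠ 0 → s j ≠ s 0 := fun j hj hj0 hEq => by
      have := hinj j 0 hj (by omega) hEq
      omega
    refine Subtype.ext (Subtype.ext (funext fun i => ?_))
    dsimp only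
    by_cases hi0 : i = 0
    · rw [if_pos hi0, hi0]
    · rw [if_neg hi0]
      by_cases hi1 : i = 1
      · rw [if_pos hi1, hi1, h1']
      · rw [if_neg hi1]
        by_cases hi : i < n
        · rw [if_pos hi]
          simp only [if_pos (by omega : i-2 < n-2), (by omega : i-2+2 = i)]
          have := hne0 i hi hi0
          split_ifs <;> omega
        · rw [if_neg hi]
          exact (hz i (by omega)).symm
  right_inv cy := by
    obtain ⟨c, t, ⟨hv, hinj, hz⟩, hB⟩ := cy
    have hcv : (c : ℕ) < n-1 := c.isLt
    refine Prod.ext (Fin.ext ?_) (Subtype.ext (funext fun i => ?_))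
    · dsimp only
      rw [if_pos rfl]
    · dsimp only
      by_cases hi : i < n-2
      · rw [if_pos hi]
        simp only [if_neg (by omega : ¬ i+2 = 0), if_neg (by omega : ¬ i+2 = 1),
          if_pos (by omega : i+2 < n), if_pos rfl, (by omega : i+2-2 = i)]
        have := hv i hi
        split_ifs <;> omega
      · rw [if_neg hi]
        exact (hz i (by omega)).symm

lemma pos_trichotomy {n : ℕ} (hn : 5 ≤ n) {s : ℕ → ℕ} (hs : PermSeq n s) (hA : CondA n s) :
    (¬ s 0 = n-1 ∧ ¬ s 1 = n-1) ↔ s (n-1) = n-1 := by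
  obtain ⟨hv, hinj, hz⟩ := hs
  constructor
  · rintro ⟨h0, h1⟩
    obtain ⟨j, hj, hjv⟩ := permSeq_surj ⟨hv, hinj, hz⟩ (by omega : n-1 < n)
    by_cases hje : j = n-1
    · subst hje; exact hjv
    · exfalso
      have hj0 : j ≠ 0 := fun h => h0 (h ▸ hjv)
      have hj1 : j ≠ 1 := fun h => h1 (h ▸ hjv)
      by_cases hj2 : j = n-2
      · subst hj2
        have := hA.2.2
        have := hv (n-1) (by omega)
        omega
      · have hw := hA.1 (j-2) (by omega)
        rw [(by omega : j-2+2 = j), lt_max_iff] at hw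
        have := hv (j-2) (by omega)
        have := hv (j-2+1) (by omega)
        omega
  · intro hlast
    constructor
    · intro h0
      have := hinj 0 (n-1) (by omega) (by omega) (by rw [h0, hlast])
      omega
    · intro h1
      have := hinj 1 (n-1) (by omega) (by omega) (by rw [h1, hlast])
      omega

lemma card_step (n : ℕ) (hn : 5 ≤ n) :
    Nat.card {s : ℕ → ℕ // PermSeq n s ∧ CondA n s} =
      Nat.card {s : ℕ → ℕ // PermSeq (n-1) s ∧ CondA (n-1) s} +
      (n-1) * Nat.card {s : ℕ → ℕ // PermSeq (n-2) s ∧ CondA (n-2) s} +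
      Nat.card {s : ℕ → ℕ // PermSeq (n-1) s ∧ CondB (n-1) s} := by
  classical
  set T := {s : ℕ → ℕ // PermSeq n s ∧ CondA n s} with hT
  have e1 : T ≃ {x : T // x.1 0 = n-1} ⊕ {x : T // ¬ x.1 0 = n-1} :=
    (Equiv.sumCompl _).symm
  have e2 : {x : T // ¬ x.1 0 = n-1} ≃
      {x : {x : T // ¬ x.1 0 = n-1} // x.1.1 1 = n-1} ⊕
      {x : {x : T // ¬ x.1 0 = n-1} // ¬ x.1.1 1 = n-1} :=
    (Equiv.sumCompl _).symm
  have e3 : {x : {x : T // ¬ x.1 0 = n-1} // x.1.1 1 = n-1} ≃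
      {x : T // ¬ x.1 0 = n-1 ∧ x.1 1 = n-1} :=
    Equiv.subtypeSubtypeEquivSubtypeInter (fun x : T => ¬ x.1 0 = n-1) (fun x : T => x.1 1 = n-1)
  have e4 : {x : {x : T // ¬ x.1 0 = n-1} // ¬ x.1.1 1 = n-1} ≃
      {x : T // x.1 (n-1) = n-1} :=
    (Equiv.subtypeSubtypeEquivSubtypeInter (fun x : T => ¬ x.1 0 = n-1)
        (fun x : T => ¬ x.1 1 = n-1)).trans
      (Equiv.subtypeEquivRight (fun x => pos_trichotomy hn x.2.1 x.2.2))
  have key := Nat.card_congr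
    (e1.trans (Equiv.sumCongr (Equiv.refl _) (e2.trans (Equiv.sumCongr e3 e4))))
  rw [Nat.card_sum, Nat.card_sum] at key
  rw [key]
  rw [Nat.card_congr (equivI n hn),
    Nat.card_congr ((Equiv.subtypeEquivRight (fun x => Iff.rfl)).trans (equivII n hn)),
    Nat.card_congr (equivIII n hn), Nat.card_prod]
  simp [Nat.card_eq_fintype_card]
  ring

lemma condA3 (s : ℕ → ℕ) : CondA 3 s ↔ s 0 < s 1 ∧ s 1 < s 2 := by
  unfold CondA
  constructor
  · rintro ⟨-, h1, h2⟩
    norm_num at h1 h2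
    exact ⟨h1, h2⟩
  · rintro ⟨h1, h2⟩
    refine ⟨fun i hi => absurd hi (by omega), ?_, ?_⟩ <;> norm_num
    exacts [h1, h2]

lemma condA4 (s : ℕ → ℕ) : CondA 4 s ↔ (s 2 < s 0 ∨ s 2 < s 1) ∧ s 1 < s 2 ∧ s 2 < s 3 := by
  unfold CondA
  constructor
  · rintro ⟨hw, h1, h2⟩
    norm_num at h1 h2
    have := hw 0 (by omega)
    norm_num at this
    exact ⟨this, h1, h2⟩
  · rintro ⟨hw, h1, h2⟩
    refine ⟨fun i hi => ?_, ?_, ?_⟩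
    · have hie : i = 0 := by omega
      subst hie
      norm_num
      exact hw
    · norm_num
      exact h1
    · norm_num
      exact h2

theorem a_recurrence (σ123 σ213 σ312 : Equiv.Perm (Fin 3))
    (h123 : σ123 0 = 0 ∧ σ123 1 = 1 ∧ σ123 2 = 2)
    (h213 : σ213 0 = 1 ∧ σ213 1 = 0 ∧ σ213 2 = 2)
    (h312 : σ312 0 = 2 ∧ σ312 1 = 0 ∧ σ312 2 = 1)
    (a b : ℕ → ℕ)
    (ha : ∀ n, 3 ≤ n → a n = Nat.card {p : Equiv.Perm (Fin n) //
      PermOccursAt σ123 p (n - 3) ∧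
      (∀ i, PermOccursAt σ123 p i → i = n - 3) ∧
      (∀ i, ¬ PermOccursAt σ213 p i)})
    (ha0 : a 0 = 0) (ha1 : a 1 = 0) (ha2 : a 2 = 0)
    (hb : ∀ n, 3 ≤ n → b n = Nat.card {p : Equiv.Perm (Fin n) //
      (∀ i, ¬ PermOccursAt σ123 p i) ∧ (∀ i, ¬ PermOccursAt σ213 p i) ∧
      PermOccursAt σ312 p (n - 3)})
    (hb0 : b 0 = 0) (hb1 : b 1 = 0) (hb2 : b 2 = 0) :
    a 3 = 1 ∧ a 4 = 2 ∧
      ∀ n, 5 ≤ n → a n = a (n - 1) + (n - 1) * a (n - 2) + b (n - 1) := by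
  refine ⟨?_, ?_, fun n hn => ?_⟩
  · rw [ha 3 (by norm_num),
      Nat.card_congr (Equiv.subtypeEquivRight (fun p : Equiv.Perm (Fin 3) =>
        (bigA_iff h123 h213 p (by norm_num)).trans (condA3 _))),
      Nat.card_eq_fintype_card]
    decide
  · rw [ha 4 (by norm_num),
      Nat.card_congr (Equiv.subtypeEquivRight (fun p : Equiv.Perm (Fin 4) =>
        (bigA_iff h123 h213 p (by norm_num)).trans (condA4 _))),
      Nat.card_eq_fintype_card]
    decide
  · have eA : ∀ m, 3 ≤ m → a m = Nat.card {s : ℕ → ℕ // PermSeq m s ∧ CondA m s} := by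
      intro m hm
      rw [ha m hm]
      exact Nat.card_congr ((Equiv.subtypeEquivRight (fun p =>
        bigA_iff h123 h213 p hm)).trans (seqSub m (CondA m)))
    have eB : ∀ m, 3 ≤ m → b m = Nat.card {s : ℕ → ℕ // PermSeq m s ∧ CondB m s} := by
      intro m hm
      rw [hb m hm]
      exact Nat.card_congr ((Equiv.subtypeEquivRight (fun p =>
        bigB_iff h123 h213 h312 p hm)).trans (seqSub m (CondB m)))
    rw [eA n (by omega), eA (n-1) (by omega), eA (n-2) (by omega), eB (n-1) (by omega),
      card_step n hn]

end
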